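/- A countable projective system of abelian groups (E_n)_{n≥1} is pro-zero if and only if the following two conditions hold: (i) the projective system (E_n)_{n≥1} satisfies the Mittag-Leffler condition; and (ii) lim_{n≥1} E_n = 0. -/
import Mathlib


/-!
Statement 9: A countable projective system of abelian groups `(Eₙ)` is pro-zero if and
only if it satisfies the Mittag-Leffler condition and `lim Eₙ = 0`.
-/

universe u

/-- The composite transition maps `E (i + k) →+ E i` of a projective system `(Eₙ)`
of abelian groups with transition maps `t n : E (n+1) →+ E n`. -/
def projSystemTrans (E : ℕ → Type u) [∀ n, AddCommGroup (E n)]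
    (t : ∀ n, E (n + 1) →+ E n) : ∀ (i k : ℕ), E (i + k) →+ E i
  | _, 0 => AddMonoidHom.id _
  | i, (k + 1) => (projSystemTrans E t i k).comp (t (i + k))

/-- The projective system `(Eₙ)` satisfies the Mittag-Leffler condition: for every `i`
there exists `j ≥ i` such that the images of the transition maps `E k → E i` coincide
for all `k ≥ j`. -/
def MittagLefflerCondition (E : ℕ → Type u) [∀ n, AddCommGroup (E n)]
    (t : ∀ n, E (n + 1) →+ E n) : Prop :=
  ∀ i, ∃ k₀, ∀ k, k₀ ≤ k →
    (projSystemTrans E t i k).range = (projSystemTrans E t i k₀).range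

/-- The projective system `(Eₙ)` is pro-zero: for every `i` there is `j ≥ i` such that
the transition map `E j → E i` is zero. -/
def IsProZero (E : ℕ → Type u) [∀ n, AddCommGroup (E n)]
    (t : ∀ n, E (n + 1) →+ E n) : Prop :=
  ∀ i, ∃ k, projSystemTrans E t i k = 0

/-- The projective limit `lim Eₙ` vanishes. -/
def ProjLimVanishes (E : ℕ → Type u) [∀ n, AddCommGroup (E n)]
    (t : ∀ n, E (n + 1) →+ E n) : Prop :=
  ∀ f : ∀ n, E n, (∀ n, t n (f (n + 1)) = f n) → ∀ n, f n = 0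

section Aux

variable {E : ℕ → Type u} [∀ n, AddCommGroup (E n)] (t : ∀ n, E (n + 1) →+ E n)

lemma t_cast {a b : ℕ} (hab : a = b) (h1 : E (a+1) = E (b+1)) (h2 : E a = E b) (x : E (a+1)) :
    t b (cast h1 x) = cast h2 (t a x) := by subst hab; simp

lemma cast_g {i : ℕ} (g : ∀ k, E (i+k)) {u v : ℕ} (huv : u = v) {X : Type u}
    (h1 : E (i+u) = X) (h2 : E (i+v) = X) : cast h1 (g u) = cast h2 (g v) := by
  subst huv; rfl

lemma trans_cast' (i : ℕ) {k k' a : ℕ} (hk : a = i + k) (hk' : a = i + k')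
    (h : E a = E (i+k')) (h2 : E a = E (i+k)) (x : E a) :
    projSystemTrans E t i k' (cast h x) = projSystemTrans E t i k (cast h2 x) := by
  subst hk
  have : k = k' := by omega
  subst this
  simp

lemma trans_succ_left : ∀ (k i : ℕ) (h : E (i+1+k) = E (i+(k+1))) (x : E (i+1+k)),
    projSystemTrans E t i (k+1) (cast h x) = t i (projSystemTrans E t (i+1) k x)
  | 0, i, h, x => by simp [projSystemTrans]
  | (k+1), i, h, x => by
      have hab : i+1+k = i+(k+1) := by omega
      show projSystemTrans E t i (k+1) ((t (i+(k+1))) (cast h x)) = _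
      rw [t_cast t hab h (congrArg E hab) x]
      exact trans_succ_left k i (congrArg E hab) (t (i+1+k) x)

lemma trans_range_antitone (i : ℕ) {k k' : ℕ} (hkk : k ≤ k') :
    (projSystemTrans E t i k').range ≤ (projSystemTrans E t i k).range := by
  obtain ⟨m, rfl⟩ := Nat.le.dest hkk
  clear hkk
  induction m with
  | zero => exact le_rfl
  | succ m ih =>
      rintro _ ⟨y, rfl⟩
      have : projSystemTrans E t i (k+(m+1)) y
          = projSystemTrans E t i (k+m) (t (i+(k+m)) y) := rfl
      rw [this]
      exact ih ⟨_, rfl⟩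

lemma trans_compat (f : ∀ n, E n) (hf : ∀ n, t n (f (n+1)) = f n) (i : ℕ) :
    ∀ k, projSystemTrans E t i k (f (i+k)) = f i
  | 0 => rfl
  | (k+1) => by
      show projSystemTrans E t i k (t (i+k) (f (i+k+1))) = f i
      rw [hf (i+k)]
      exact trans_compat f hf i k

/-- The stable image subgroup. -/
def stableIm (i : ℕ) : AddSubgroup (E i) := ⨅ k, (projSystemTrans E t i k).range

lemma stableIm_eq (i : ℕ) {k₀ : ℕ} (hk₀ : ∀ k, k₀ ≤ k →
      (projSystemTrans E t i k).range = (projSystemTrans E t i k₀).range) :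
    stableIm t i = (projSystemTrans E t i k₀).range := by
  apply le_antisymm
  · exact iInf_le _ k₀
  · apply le_iInf
    intro k
    rcases le_total k₀ k with h | h
    · rw [hk₀ k h]
    · exact trans_range_antitone t i h

lemma stableIm_surj (hML : ∀ i, ∃ k₀, ∀ k, k₀ ≤ k →
      (projSystemTrans E t i k).range = (projSystemTrans E t i k₀).range)
    (j : ℕ) (x : E j) (hx : x ∈ stableIm t j) :
    ∃ z ∈ stableIm t (j+1), t j z = x := by
  obtain ⟨k₁, hk₁⟩ := hML (j+1)
  have hx' : x ∈ (projSystemTrans E t j (k₁+1)).range :=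
    (iInf_le (fun k => (projSystemTrans E t j k).range) (k₁+1)) hx
  obtain ⟨z, hz⟩ := hx'
  have hcast : E (j+1+k₁) = E (j+(k₁+1)) := congrArg E (by omega)
  set w : E (j+1+k₁) := cast hcast.symm z with hw
  have hzw : cast hcast w = z := by simp [hw]
  refine ⟨projSystemTrans E t (j+1) k₁ w, ?_, ?_⟩
  · rw [stableIm_eq t (j+1) hk₁]
    exact ⟨w, rfl⟩
  · rw [← trans_succ_left t k₁ j hcast w, hzw, hz]

lemma shift_vanish (hV : ∀ f : ∀ n, E n, (∀ n, t n (f (n + 1)) = f n) → ∀ n, f n = 0)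
    (i : ℕ) (g : ∀ k, E (i+k)) (hg : ∀ k, t (i+k) (g (k+1)) = g k) : ∀ k, g k = 0 := by
  set f : ∀ n, E n := fun n =>
    if h : i ≤ n then cast (congrArg E (by omega : i + (n-i) = n)) (g (n-i))
    else projSystemTrans E t n (i-n)
      (cast (congrArg E (by omega : i = n + (i-n))) (g 0)) with hfdef
  have key : ∀ n, f n = 0 := by
    apply hV f
    intro n
    by_cases h1 : i ≤ n
    · have h2 : i ≤ n + 1 := by omega
      simp only [hfdef, dif_pos h1, dif_pos h2]
      rw [cast_g g (show n+1-i = (n-i)+1 by omega) _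
        (congrArg E (by omega : i + ((n-i)+1) = n+1))]
      rw [t_cast t (show i+(n-i) = n by omega) _ (congrArg E (by omega)) (g ((n-i)+1))]
      rw [hg (n-i)]
    · by_cases h2 : i ≤ n + 1
      · -- i = n+1
        simp only [hfdef, dif_pos h2, dif_neg h1]
        rw [trans_cast' t n (show i = n + 1 by omega) (show i = n + (i-n) by omega)
          _ (congrArg E (show i = n + 1 by omega)) (g 0)]
        rw [cast_g g (show n+1-i = 0 by omega) _
          (congrArg E (show i + 0 = n + 1 by omega))]
        rfl
      · -- n + 1 < i
        simp only [hfdef, dif_neg h1, dif_neg h2]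
        have hc : E (n+1+(i-(n+1))) = E (n+((i-(n+1))+1)) := congrArg E (by omega)
        rw [← trans_succ_left t (i-(n+1)) n hc
          (cast (congrArg E (by omega : i = (n+1) + (i-(n+1)))) (g 0))]
        rw [cast_cast]
        rw [trans_cast' t n (show i = n + ((i-(n+1))+1) by omega)
          (show i = n + (i-n) by omega) _
          (congrArg E (show i = n + ((i-(n+1))+1) by omega)) (g 0)]
  intro k
  have h := key (i + k)
  have hik : i ≤ i + k := by omega
  rw [hfdef] at h
  simp only [dif_pos hik] at h
  rw [cast_g g (show i+k-i = k by omega) _ (rfl : E (i+k) = E (i+k))] at h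
  rwa [cast_eq] at h

end Aux

lemma range_bot_to_zero {A B : Type u} [AddCommGroup A] [AddCommGroup B]
    (f : A →+ B) (h : f.range = ⊥) : f = 0 := by
  ext x
  have hx : f x ∈ f.range := ⟨x, rfl⟩
  rw [h] at hx
  simpa using hx

theorem proZero_iff_mittagLeffler_and_lim_eq_zero
    (E : ℕ → Type u) [∀ n, AddCommGroup (E n)] (t : ∀ n, E (n + 1) →+ E n) :
    IsProZero E t ↔ MittagLefflerCondition E t ∧ ProjLimVanishes E t := by
  constructor
  · intro h
    constructor
    · intro i
      obtain ⟨k, hk⟩ := h i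
      have hbot : (projSystemTrans E t i k).range = ⊥ := by
        rw [hk]
        ext x
        simp
      refine ⟨k, fun kk hkk => ?_⟩
      rw [hbot, eq_bot_iff]
      exact le_trans (trans_range_antitone t i hkk) hbot.le
    · intro f hf n
      obtain ⟨k, hk⟩ := h n
      have := trans_compat t f hf n k
      rw [hk] at this
      simpa using this.symm
  · rintro ⟨hML, hV⟩ i
    obtain ⟨k₀, hk₀⟩ := hML i
    have hbot : stableIm t i = ⊥ := by
      rw [eq_bot_iff]
      intro x hx
      let s : ∀ k, {y : E (i+k) // y ∈ stableIm t (i+k)} := fun k =>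
        Nat.rec ⟨x, hx⟩ (fun k p =>
          ⟨(stableIm_surj t hML (i+k) p.1 p.2).choose,
            ((stableIm_surj t hML (i+k) p.1 p.2).choose_spec).1⟩) k
      have hs : ∀ k, t (i+k) ((s (k+1)).1) = (s k).1 := fun k =>
        ((stableIm_surj t hML (i+k) (s k).1 (s k).2).choose_spec).2
      have h0 := shift_vanish t hV i (fun k => (s k).1) hs 0
      have : x = 0 := h0
      simp [this]
    refine ⟨k₀, range_bot_to_zero _ ?_⟩
    rw [← stableIm_eq t i hk₀]
    exact hbot
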